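/- Assume u_a < 0 and u_b > 0. For every t > 0 and every x with a < x < c, the approximate velocity u^ε(x,t) tends to 0 and the approximate potential density R^ε(x,t) tends to ρ_c·(x − c) as ε → 0⁺; and for every x with c < x < b, u^ε(x,t) tends to 0 and R^ε(x,t) tends to 0 as ε → 0⁺. -/

import Mathlib

open Real Filter Topology

/-- The unnormalized complementary error function `erfc z = ∫_z^∞ e^{-s²} ds`. -/
noncomputable def erfc (z : ℝ) : ℝ := ∫ s in Set.Ioi z, Real.exp (-s ^ 2)

/-- The denominator `D(x,t,ε)` appearing in the Hopf–Cole formulas. -/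
noncomputable def D (a b u_a u_b x t ε : ℝ) : ℝ :=
  erfc ((x - a - u_a * t) / Real.sqrt (2 * t * ε))
      * Real.exp (((x - a - u_a * t) ^ 2 - (x - a) ^ 2) / (2 * t * ε))
    + erfc ((x - b) / Real.sqrt (2 * t * ε))
    - erfc ((x - a) / Real.sqrt (2 * t * ε))
    + erfc (-(x - b) / Real.sqrt (2 * t * ε)) * Real.exp (-u_b / ε)

/-- The approximate velocity `u^ε(x,t)`. -/
noncomputable def uEps (a b u_a u_b x t ε : ℝ) : ℝ :=
  (u_a * erfc ((x - a - u_a * t) / Real.sqrt (2 * t * ε))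
        * Real.exp (((x - a - u_a * t) ^ 2 - (x - a) ^ 2) / (2 * t * ε))
      + ε / Real.sqrt (2 * t * ε) * Real.exp (-(x - b) ^ 2 / (2 * t * ε))
          * (1 - Real.exp (-u_b / ε)))
    / D a b u_a u_b x t ε

/-- The approximate potential density `R^ε(x,t)`. -/
noncomputable def REps (a b c d u_a u_b ρ_c ρ_d x t ε : ℝ) : ℝ :=
  (t * ε / Real.sqrt (2 * t * ε) * ρ_c * Real.exp (-(x - a) ^ 2 / (2 * t * ε))
      + ρ_c * (x - c - u_a * t)
          * Real.exp (((x - a - u_a * t) ^ 2 - (x - a) ^ 2) / (2 * t * ε))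
          * erfc ((x - a - u_a * t) / Real.sqrt (2 * t * ε))
      + t * ε / Real.sqrt (2 * t * ε) * ρ_c
          * (Real.exp (-(x - a) ^ 2 / (2 * t * ε)) - Real.exp (-(x - c) ^ 2 / (2 * t * ε)))
      + ρ_c * (x - c)
          * (erfc ((x - c) / Real.sqrt (2 * t * ε)) - erfc ((x - a) / Real.sqrt (2 * t * ε)))
      + ρ_d * Real.exp (-u_b / ε) * erfc (-(x - d) / Real.sqrt (2 * t * ε)))
    / D a b u_a u_b x t ε


/-!
The Gaussian tail bound `erfc z ≤ √π e^{-z²}` (for `z ≥ 0`) is the only estimate needed.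
With `h = 2tε`, each term of the Hopf–Cole formulas is either `erfc (k / √h)` with `k ≠ 0`,
which tends to `0` or `√π` according to the sign of `k`, or is exponentially small.
The one delicate term is `erfc (A / √h) · e^{(A² - B²)/h}` with `A = x - a - u_a t ≥ B = x - a > 0`,
where the tail bound turns the product into `√π e^{-B²/h}`. Hence `D → √π`, the numerator of
`u^ε` tends to `0`, and the numerator of `R^ε` tends to `ρ_c (x - c) · lim erfc ((x - c) / √h)`,
which is `ρ_c (x - c) √π` for `x < c` and `0` for `x > c`.
-/

open MeasureTheory

lemma integrable_exp_neg_sq : Integrable (fun s : ℝ => exp (-s ^ 2)) := by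
  simpa using integrable_exp_neg_mul_sq (b := 1) one_pos

lemma integral_exp_neg_sq : ∫ s : ℝ, exp (-s ^ 2) = √π := by
  simpa using integral_gaussian 1

lemma erfc_nonneg (z : ℝ) : 0 ≤ erfc z :=
  setIntegral_nonneg measurableSet_Ioi fun _ _ => (exp_pos _).le

lemma erfc_le_sqrt_pi_mul_exp {z : ℝ} (hz : 0 ≤ z) : erfc z ≤ √π * exp (-z ^ 2) := by
  have hshift : Integrable (fun s : ℝ => exp (-(s - z) ^ 2)) := by
    simpa using integrable_exp_neg_sq.comp_sub_right z
  have hpointwise : ∀ s ∈ Set.Ioi z, exp (-s ^ 2) ≤ exp (-z ^ 2) * exp (-(s - z) ^ 2) := by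
    intro s hs
    rw [← exp_add]
    -- `s² = z² + (s - z)² + 2z(s - z)` and the last term is nonnegative
    exact exp_le_exp.2 (by nlinarith [Set.mem_Ioi.1 hs])
  have hshift_le : ∫ s in Set.Ioi z, exp (-(s - z) ^ 2) ≤ √π := by
    calc ∫ s in Set.Ioi z, exp (-(s - z) ^ 2) ≤ ∫ s : ℝ, exp (-(s - z) ^ 2) :=
          setIntegral_le_integral hshift (.of_forall fun _ => (exp_pos _).le)
      _ = √π := by
          rw [integral_sub_right_eq_self (fun s : ℝ => exp (-s ^ 2)) z, integral_exp_neg_sq]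
  calc erfc z ≤ ∫ s in Set.Ioi z, exp (-z ^ 2) * exp (-(s - z) ^ 2) :=
        setIntegral_mono_on integrable_exp_neg_sq.integrableOn
          (hshift.const_mul _).integrableOn measurableSet_Ioi hpointwise
    _ = exp (-z ^ 2) * ∫ s in Set.Ioi z, exp (-(s - z) ^ 2) := integral_const_mul _ _
    _ ≤ exp (-z ^ 2) * √π := mul_le_mul_of_nonneg_left hshift_le (exp_pos _).le
    _ = √π * exp (-z ^ 2) := mul_comm _ _

lemma erfc_neg (z : ℝ) : erfc (-z) = √π - erfc z := by
  have hIic : erfc (-z) = ∫ s in Set.Iic z, exp (-s ^ 2) := by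
    have := integral_comp_neg_Ioi (-z) (fun s : ℝ => exp (-s ^ 2))
    simp only [neg_sq, neg_neg] at this
    rw [erfc, this]
  have hsplit := intervalIntegral.integral_Iic_add_Ioi (b := z)
    integrable_exp_neg_sq.integrableOn integrable_exp_neg_sq.integrableOn
  rw [integral_exp_neg_sq] at hsplit
  rw [hIic, erfc]
  linarith

lemma tendsto_erfc_atTop : Tendsto erfc atTop (𝓝 0) := by
  have hbound : Tendsto (fun z : ℝ => √π * exp (-z ^ 2)) atTop (𝓝 0) := by
    simpa using (tendsto_exp_atBot.comp
      (tendsto_neg_atTop_atBot.comp (tendsto_pow_atTop two_ne_zero))).const_mul √π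
  refine tendsto_of_tendsto_of_tendsto_of_le_of_le' tendsto_const_nhds hbound
    (.of_forall erfc_nonneg) ?_
  filter_upwards [eventually_ge_atTop 0] with z hz using erfc_le_sqrt_pi_mul_exp hz

lemma tendsto_erfc_atBot : Tendsto erfc atBot (𝓝 √π) := by
  have h := (tendsto_erfc_atTop.comp tendsto_neg_atBot_atTop).const_sub √π
  rw [sub_zero] at h
  exact h.congr fun z => by simp [erfc_neg]

section SmallScale

variable {k : ℝ}

lemma tendsto_sqrt_nhdsGT_zero : Tendsto (√·) (𝓝[>] (0 : ℝ)) (𝓝[>] 0) := by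
  refine tendsto_nhdsWithin_iff.2 ⟨?_, ?_⟩
  · simpa using (continuous_sqrt.tendsto 0).mono_left nhdsWithin_le_nhds
  · filter_upwards [self_mem_nhdsWithin] with h (hh : 0 < h) using sqrt_pos.2 hh

lemma tendsto_const_mul_nhdsGT_zero {c : ℝ} (hc : 0 < c) :
    Tendsto (c * ·) (𝓝[>] (0 : ℝ)) (𝓝[>] 0) :=
  tendsto_iff_comap.2 (comap_mulLeft_nhdsGT_zero hc).ge

lemma tendsto_div_sqrt_atTop (hk : 0 < k) : Tendsto (fun h => k / √h) (𝓝[>] 0) atTop := by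
  simpa [div_eq_mul_inv] using
    (tendsto_inv_nhdsGT_zero.comp tendsto_sqrt_nhdsGT_zero).const_mul_atTop hk

lemma tendsto_div_sqrt_atBot (hk : k < 0) : Tendsto (fun h => k / √h) (𝓝[>] 0) atBot := by
  simpa [div_eq_mul_inv] using
    (tendsto_inv_nhdsGT_zero.comp tendsto_sqrt_nhdsGT_zero).const_mul_atTop_of_neg hk

lemma tendsto_erfc_div_sqrt_of_pos (hk : 0 < k) :
    Tendsto (fun h => erfc (k / √h)) (𝓝[>] 0) (𝓝 0) :=
  tendsto_erfc_atTop.comp (tendsto_div_sqrt_atTop hk)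

lemma tendsto_erfc_div_sqrt_of_neg (hk : k < 0) :
    Tendsto (fun h => erfc (k / √h)) (𝓝[>] 0) (𝓝 √π) :=
  tendsto_erfc_atBot.comp (tendsto_div_sqrt_atBot hk)

lemma tendsto_exp_div_of_neg (hk : k < 0) : Tendsto (fun h => exp (k / h)) (𝓝[>] 0) (𝓝 0) :=
  tendsto_exp_atBot.comp <| (tendsto_inv_nhdsGT_zero.const_mul_atTop_of_neg hk).congr
    fun h => (div_eq_mul_inv k h).symm

lemma tendsto_div_sqrt_nhdsGT_zero : Tendsto (fun h : ℝ => h / √h) (𝓝[>] 0) (𝓝 0) := by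
  simpa [div_sqrt] using (continuous_sqrt.tendsto 0).mono_left nhdsWithin_le_nhds

lemma tendsto_erfc_div_sqrt_mul_exp {A B : ℝ} (hB : 0 < B) (hBA : B ≤ A) :
    Tendsto (fun h => erfc (A / √h) * exp ((A ^ 2 - B ^ 2) / h)) (𝓝[>] 0) (𝓝 0) := by
  have hbound : ∀ᶠ h in 𝓝[>] (0 : ℝ),
      erfc (A / √h) * exp ((A ^ 2 - B ^ 2) / h) ≤ √π * exp (-B ^ 2 / h) := by
    filter_upwards [self_mem_nhdsWithin] with h (hh : 0 < h)
    have hsq : (A / √h) ^ 2 = A ^ 2 / h := by rw [div_pow, sq_sqrt hh.le]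
    have htail := erfc_le_sqrt_pi_mul_exp (div_nonneg (hB.le.trans hBA) (sqrt_nonneg h))
    calc erfc (A / √h) * exp ((A ^ 2 - B ^ 2) / h)
        ≤ √π * exp (-(A ^ 2 / h)) * exp ((A ^ 2 - B ^ 2) / h) := by
          rw [← hsq]; exact mul_le_mul_of_nonneg_right htail (exp_pos _).le
      _ = √π * exp (-B ^ 2 / h) := by
          rw [mul_assoc, ← exp_add]; congr 2; ring
  have hlim : Tendsto (fun h => √π * exp (-B ^ 2 / h)) (𝓝[>] 0) (𝓝 0) := by
    simpa using (tendsto_exp_div_of_neg (neg_lt_zero.2 (pow_pos hB 2))).const_mul √π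
  exact tendsto_of_tendsto_of_tendsto_of_le_of_le' tendsto_const_nhds hlim
    (.of_forall fun _ => mul_nonneg (erfc_nonneg _) (exp_pos _).le) hbound

end SmallScale

section HopfCole

variable {a b c d u_a u_b ρ_c ρ_d x t : ℝ}

lemma tendsto_two_mul_mul_nhdsGT_zero (ht : 0 < t) :
    Tendsto (fun ε => 2 * t * ε) (𝓝[>] 0) (𝓝[>] 0) :=
  tendsto_const_mul_nhdsGT_zero (by positivity)

lemma tendsto_mul_div_sqrt_two_mul (k : ℝ) (ht : 0 < t) :
    Tendsto (fun ε => k * ε / √(2 * t * ε)) (𝓝[>] 0) (𝓝 0) := by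
  have h := (tendsto_div_sqrt_nhdsGT_zero.comp (tendsto_two_mul_mul_nhdsGT_zero ht)).const_mul
    (k / (2 * t))
  rw [mul_zero] at h
  refine h.congr fun ε => ?_
  simp only [Function.comp_apply]
  field_simp

lemma tendsto_erfc_mul_exp_shift (hax : a < x) (hua : u_a < 0) (ht : 0 < t) :
    Tendsto (fun ε => erfc ((x - a - u_a * t) / √(2 * t * ε))
      * exp (((x - a - u_a * t) ^ 2 - (x - a) ^ 2) / (2 * t * ε))) (𝓝[>] 0) (𝓝 0) :=
  (tendsto_erfc_div_sqrt_mul_exp (by linarith) (by nlinarith)).comp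
    (tendsto_two_mul_mul_nhdsGT_zero ht)

lemma tendsto_D (hax : a < x) (hxb : x < b) (hua : u_a < 0) (hub : 0 < u_b) (ht : 0 < t) :
    Tendsto (fun ε => D a b u_a u_b x t ε) (𝓝[>] 0) (𝓝 √π) := by
  have hs := tendsto_two_mul_mul_nhdsGT_zero ht
  have herfc_b := (tendsto_erfc_div_sqrt_of_neg (k := x - b) (by linarith)).comp hs
  have herfc_a := (tendsto_erfc_div_sqrt_of_pos (k := x - a) (by linarith)).comp hs
  have hright := ((tendsto_erfc_div_sqrt_of_pos (k := -(x - b)) (by linarith)).comp hs).mul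
    (tendsto_exp_div_of_neg (k := -u_b) (by linarith))
  have h := (((tendsto_erfc_mul_exp_shift hax hua ht).add herfc_b).sub herfc_a).add hright
  rw [zero_add, sub_zero, mul_zero, add_zero] at h
  exact h

lemma tendsto_uEps (hax : a < x) (hxb : x < b) (hua : u_a < 0) (hub : 0 < u_b) (ht : 0 < t) :
    Tendsto (fun ε => uEps a b u_a u_b x t ε) (𝓝[>] 0) (𝓝 0) := by
  have hshift := (tendsto_erfc_mul_exp_shift hax hua ht).const_mul u_a
  have hb := ((tendsto_mul_div_sqrt_two_mul 1 ht).mul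
    ((tendsto_exp_div_of_neg (k := -(x - b) ^ 2) (by nlinarith)).comp
      (tendsto_two_mul_mul_nhdsGT_zero ht))).mul
    (Tendsto.const_sub 1 (tendsto_exp_div_of_neg (k := -u_b) (by linarith)))
  have h := (hshift.add hb).div (tendsto_D hax hxb hua hub ht) (sqrt_pos.2 pi_pos).ne'
  rw [mul_zero, zero_mul, zero_mul, add_zero, zero_div] at h
  exact h.congr fun ε => by simp [uEps, mul_assoc]

lemma tendsto_REps {L : ℝ} (hax : a < x) (hxb : x < b) (hxd : x < d) (hxc : x ≠ c)
    (hua : u_a < 0) (hub : 0 < u_b) (ht : 0 < t)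
    (hL : Tendsto (fun ε => erfc ((x - c) / √(2 * t * ε))) (𝓝[>] 0) (𝓝 L)) :
    Tendsto (fun ε => REps a b c d u_a u_b ρ_c ρ_d x t ε) (𝓝[>] 0)
      (𝓝 (ρ_c * (x - c) * L / √π)) := by
  have hs := tendsto_two_mul_mul_nhdsGT_zero ht
  have hexp_a := (tendsto_exp_div_of_neg (k := -(x - a) ^ 2) (by nlinarith)).comp hs
  have hexp_c := (tendsto_exp_div_of_neg (k := -(x - c) ^ 2)
    (neg_lt_zero.2 (sq_pos_of_ne_zero (sub_ne_zero.2 hxc)))).comp hs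
  have hscale := (tendsto_mul_div_sqrt_two_mul t ht).mul_const ρ_c
  have hgauss := hscale.mul hexp_a
  have hshift := (tendsto_erfc_mul_exp_shift hax hua ht).const_mul (ρ_c * (x - c - u_a * t))
  have hgauss_diff := hscale.mul (hexp_a.sub hexp_c)
  have herfc_a := (tendsto_erfc_div_sqrt_of_pos (k := x - a) (by linarith)).comp hs
  have hjump := (hL.sub herfc_a).const_mul (ρ_c * (x - c))
  have hright := ((tendsto_exp_div_of_neg (k := -u_b) (by linarith)).const_mul ρ_d).mul
    ((tendsto_erfc_div_sqrt_of_pos (k := -(x - d)) (by linarith)).comp hs)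
  have h := ((((hgauss.add hshift).add hgauss_diff).add hjump).add hright).div
    (tendsto_D hax hxb hua hub ht) (sqrt_pos.2 pi_pos).ne'
  simp only [mul_zero, zero_mul, sub_zero, zero_add, add_zero, sub_self] at h
  exact h.congr fun ε => by simp only [REps, Pi.div_apply, Function.comp_apply]; ring

end HopfCole

/-- Case `u_a < 0`, `u_b > 0`, regions `a < x < c` and `c < x < b`: as `ε → 0⁺`, the
approximate velocity tends to `0`, and the approximate potential density tends to
`ρ_c·(x − c)` in the first region and to `0` in the second. -/
theorem vanishing_viscosity_limit_middle_regions
    (a b c d u_a u_b ρ_c ρ_d : ℝ) (hac : a < c) (hcb : c < b) (hbd : b < d)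
    (hua : u_a < 0) (hub : 0 < u_b) (t x : ℝ) (ht : 0 < t) :
    (a < x → x < c →
      Tendsto (fun ε : ℝ => uEps a b u_a u_b x t ε) (𝓝[>] 0) (𝓝 0)
      ∧ Tendsto (fun ε : ℝ => REps a b c d u_a u_b ρ_c ρ_d x t ε) (𝓝[>] 0)
          (𝓝 (ρ_c * (x - c))))
    ∧ (c < x → x < b →
      Tendsto (fun ε : ℝ => uEps a b u_a u_b x t ε) (𝓝[>] 0) (𝓝 0)
      ∧ Tendsto (fun ε : ℝ => REps a b c d u_a u_b ρ_c ρ_d x t ε) (𝓝[>] 0) (𝓝 0)) := by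
  have hs := tendsto_two_mul_mul_nhdsGT_zero ht
  constructor
  · intro hax hxc
    have hxb := hxc.trans hcb
    refine ⟨tendsto_uEps hax hxb hua hub ht, ?_⟩
    have h := tendsto_REps (ρ_c := ρ_c) (ρ_d := ρ_d) hax hxb (hxb.trans hbd) hxc.ne hua hub ht
      ((tendsto_erfc_div_sqrt_of_neg (sub_neg.2 hxc)).comp hs)
    rwa [mul_div_cancel_right₀ _ (sqrt_pos.2 pi_pos).ne'] at h
  · intro hcx hxb
    refine ⟨tendsto_uEps (hac.trans hcx) hxb hua hub ht, ?_⟩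
    have h := tendsto_REps (ρ_c := ρ_c) (ρ_d := ρ_d) (hac.trans hcx) hxb (hxb.trans hbd)
      hcx.ne' hua hub ht ((tendsto_erfc_div_sqrt_of_pos (sub_pos.2 hcx)).comp hs)
    rwa [mul_zero, zero_div] at h
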